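/- Let 0 < p < 1/2. There exists a constant C > 0 such that for every n ≥ 1 and every word w ∈ {1,2,3}ⁿ, the operator norm of the product satisfies ‖C_w‖ ≤ C · (max{2p, 1−2p})ⁿ. -/

import Mathlib

open Matrix MeasureTheory Filter
open scoped ENNReal

noncomputable section

abbrev E3 : Type := EuclideanSpace ℝ (Fin 3)
abbrev Mat3 : Type := Matrix (Fin 3) (Fin 3) ℝ

/-- The action of a matrix on Euclidean 3-space. -/
noncomputable def matApply (A : Mat3) (x : E3) : E3 := Matrix.toEuclideanCLM (𝕜 := ℝ) A x

/-- The largest singular value `α₁(A) = ‖A‖` (Euclidean operator norm). -/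
noncomputable def sv1 (A : Mat3) : ℝ := ‖Matrix.toEuclideanCLM (𝕜 := ℝ) A‖

/-- The smallest singular value `α₃(A) = ‖A⁻¹‖⁻¹`. -/
noncomputable def sv3 (A : Mat3) : ℝ := (‖Matrix.toEuclideanCLM (𝕜 := ℝ) A⁻¹‖)⁻¹

/-- The middle singular value `α₂(A) = |det A| / (α₁(A) α₃(A))`. -/
noncomputable def sv2 (A : Mat3) : ℝ := |A.det| / (sv1 A * sv3 A)

/-- Falconer's singular value function `φ^s(A)`. -/
noncomputable def svf (s : ℝ) (A : Mat3) : ℝ :=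
  if s ≤ 1 then (sv1 A) ^ s
  else if s ≤ 2 then sv1 A * (sv2 A) ^ (s - 1)
  else if s ≤ 3 then sv1 A * sv2 A * (sv3 A) ^ (s - 2)
  else (sv1 A * sv2 A * sv3 A) ^ (s / 3)

/-- The three matrices `C₁, C₂, C₃` (with 0-based indexing). -/
def Cmat (p : ℝ) : Fin 3 → Mat3 :=
  ![!![1 - 2*p, -p, -p; 0, p, 0; 0, 0, p],
    !![p, 0, 0; -p, 1 - 2*p, -p; 0, 0, p],
    !![p, 0, 0; 0, p, 0; -p, -p, 1 - 2*p]]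

/-- The product `C_w = C_{j₁} ⋯ C_{jₙ}` along a word `w = (j₁, …, jₙ)`. -/
noncomputable def Cword (p : ℝ) {n : ℕ} (w : Fin n → Fin 3) : Mat3 :=
  ((List.ofFn w).map (Cmat p)).prod

/-- standard basis vectors of `E3` -/
noncomputable def eVec (i : Fin 3) : E3 := EuclideanSpace.single i 1

/-- The affine map `G_i(x) = C_i x + 2p·e_i`. -/
noncomputable def Gmap (p : ℝ) (i : Fin 3) (x : E3) : E3 :=
  matApply (Cmat p i) x + (2 * p) • eVec i

/-- The composition `G_w = G_{j₁} ∘ ⋯ ∘ G_{jₙ}` along a word `w = (j₁, …, jₙ)`. -/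
noncomputable def Gword (p : ℝ) {n : ℕ} (w : Fin n → Fin 3) : E3 → E3 :=
  ((List.ofFn w).map (Gmap p)).foldr (· ∘ ·) id

/-- Summability of the double series `Σ_{n=1}^∞ Σ_{w ∈ {1,2,3}ⁿ} φ^s(C_w)`
(all terms are nonnegative, so summability is equivalent to finiteness of the sum). -/
def seriesSummable (p s : ℝ) : Prop :=
  Summable (fun x : Σ n : ℕ, (Fin (n+1) → Fin 3) => svf s (Cword p x.2))

/-- The affinity dimension `s₀ = inf{s > 0 : Σ_n Σ_w φ^s(C_w) < ∞}`. -/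
noncomputable def s0 (p : ℝ) : ℝ := sInf {s : ℝ | 0 < s ∧ seriesSummable p s}

/-- The minimal number of balls of radius `δ` needed to cover `A`. -/
noncomputable def coverNum (A : Set E3) (δ : ℝ) : ℕ :=
  sInf {n : ℕ | ∃ t : Finset E3, t.card = n ∧ A ⊆ ⋃ x ∈ t, Metric.ball x δ}

/-- The upper box-counting dimension `limsup_{δ→0⁺} log N_δ(A) / (−log δ)`. -/
noncomputable def upperBoxDim (A : Set E3) : ℝ :=
  Filter.limsup (fun δ : ℝ => Real.log (coverNum A δ) / (-Real.log δ))
    (nhdsWithin 0 (Set.Ioi 0))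

/-- The vector `(1,1,1)`. -/
noncomputable def onesVec : E3 := (WithLp.equiv 2 (Fin 3 → ℝ)).symm ![1, 1, 1]

/-- Orthogonal projection of `ℝ³` onto the plane `V = {x : x₁ + x₂ + x₃ = 0}`. -/
noncomputable def projV (x : E3) : E3 := x - (((x 0) + (x 1) + (x 2)) / 3) • onesVec

/-- The vector `(a,b,c)` in `E3`. -/
noncomputable def vec3 (a b c : ℝ) : E3 := (WithLp.equiv 2 (Fin 3 → ℝ)).symm ![a, b, c]

/-- The triangle `T₀ = conv{e₁, e₂, e₃}`. -/
noncomputable def T0set : Set E3 := convexHull ℝ {eVec 0, eVec 1, eVec 2}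

/-- The standard tetrahedron `W = conv{0, e₁, e₂, e₃}`. -/
noncomputable def Wset : Set E3 := convexHull ℝ {0, eVec 0, eVec 1, eVec 2}

/-- The triangle `T_ε = conv{(1−2ε,ε,ε), (ε,1−2ε,ε), (ε,ε,1−2ε)}`. -/
noncomputable def Ttri (ε : ℝ) : Set E3 :=
  convexHull ℝ {vec3 (1 - 2*ε) ε ε, vec3 ε (1 - 2*ε) ε, vec3 ε ε (1 - 2*ε)}

/-!
Each column of each `Cᵢ` has absolute sum `|1 − 2p|` or `2|p|`, both at most `max {2p, 1 − 2p}`.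
So the ℓ¹ operator norm (the ℓ^∞ operator norm of the transpose) is at most that number on each
factor, hence at most its `n`-th power on `C_w` by submultiplicativity; and on the
finite-dimensional space of 3×3 matrices it dominates the Euclidean operator norm up to a constant.
-/

open scoped Matrix.Norms.Operator

theorem Matrix.linfty_opNorm_le_of_forall_sum_le {m n α : Type*} [Fintype m] [Fintype n]
    [SeminormedAddCommGroup α] {A : Matrix m n α} {r : ℝ} (hr : 0 ≤ r)
    (h : ∀ i, ∑ j, ‖A i j‖ ≤ r) : ‖A‖ ≤ r := by
  lift r to NNReal using hr
  rw [linfty_opNorm_def, NNReal.coe_le_coe]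
  exact Finset.sup_le fun i _ => by rw [← NNReal.coe_le_coe, NNReal.coe_sum]; exact h i

theorem List.norm_prod_le_pow_length {α : Type*} [SeminormedRing α] [NormOneClass α]
    {l : List α} {r : ℝ} (h : ∀ a ∈ l, ‖a‖ ≤ r) : ‖l.prod‖ ≤ r ^ l.length := by
  induction l with
  | nil => simp
  | cons a l ih =>
    rw [List.forall_mem_cons] at h
    rw [List.prod_cons, List.length_cons, pow_succ']
    exact (norm_mul_le a l.prod).trans
      (mul_le_mul h.1 (ih h.2) (norm_nonneg _) ((norm_nonneg a).trans h.1))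

theorem Matrix.exists_norm_toEuclideanCLM_le_mul_linfty_opNorm_transpose {n : Type*} [Fintype n]
    [DecidableEq n] :
    ∃ K, 0 < K ∧ ∀ A : Matrix n n ℝ, ‖toEuclideanCLM (𝕜 := ℝ) A‖ ≤ K * ‖Aᵀ‖ := by
  let Φ : Matrix n n ℝ →ₗ[ℝ] (EuclideanSpace ℝ n →L[ℝ] EuclideanSpace ℝ n) :=
    (toEuclideanCLM (n := n) (𝕜 := ℝ)).toAlgEquiv.toLinearMap ∘ₗ
      (transposeLinearEquiv n n ℝ ℝ).toLinearMap
  obtain ⟨K, hK, hΦ⟩ := (LinearMap.toContinuousLinearMap Φ).bound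
  exact ⟨K, hK, fun A => hΦ Aᵀ⟩

lemma abs_one_sub_two_mul_le_max (p : ℝ) : |1 - 2 * p| ≤ max (2 * p) (1 - 2 * p) := by
  rw [abs_le]
  constructor <;> linarith [le_max_left (2 * p) (1 - 2 * p), le_max_right (2 * p) (1 - 2 * p)]

lemma two_mul_abs_le_max (p : ℝ) : 2 * |p| ≤ max (2 * p) (1 - 2 * p) := by
  rcases abs_cases p with ⟨h, _⟩ | ⟨h, _⟩ <;> rw [h]
  · exact le_max_left _ _
  · linarith [le_max_right (2 * p) (1 - 2 * p)]

lemma linfty_opNorm_transpose_Cmat_le (p : ℝ) (i : Fin 3) :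
    ‖(Cmat p i)ᵀ‖ ≤ max (2 * p) (1 - 2 * p) := by
  have h1 := abs_one_sub_two_mul_le_max p
  have h2 := two_mul_abs_le_max p
  refine linfty_opNorm_le_of_forall_sum_le ((abs_nonneg _).trans h1) fun j => ?_
  fin_cases i <;> fin_cases j <;> simpa [Cmat, Fin.sum_univ_three, ← two_mul, -le_sup_iff]

lemma linfty_opNorm_transpose_Cword_le (p : ℝ) {n : ℕ} (w : Fin n → Fin 3) :
    ‖(Cword p w)ᵀ‖ ≤ max (2 * p) (1 - 2 * p) ^ n := by
  rw [Cword, transpose_list_prod]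
  refine (List.norm_prod_le_pow_length (r := max (2 * p) (1 - 2 * p)) ?_).trans_eq (by simp)
  simp only [List.mem_reverse, List.map_map, List.mem_map, List.mem_ofFn]
  rintro _ ⟨_, ⟨k, rfl⟩, rfl⟩
  exact linfty_opNorm_transpose_Cmat_le p (w k)

theorem norm_Cword_le_general (p : ℝ) :
    ∃ C : ℝ, 0 < C ∧ ∀ n : ℕ, 1 ≤ n → ∀ w : Fin n → Fin 3,
      sv1 (Cword p w) ≤ C * (max (2*p) (1 - 2*p)) ^ n := by
  obtain ⟨K, hK, hnorm⟩ := exists_norm_toEuclideanCLM_le_mul_linfty_opNorm_transpose (n := Fin 3)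
  refine ⟨K, hK, fun n _ w => (hnorm _).trans ?_⟩
  exact mul_le_mul_of_nonneg_left (linfty_opNorm_transpose_Cword_le p w) hK.le

/-- Lemma (exponential contraction of the matrix products). -/
theorem norm_Cword_le (p : ℝ) (hp0 : 0 < p) (hp1 : p < 1/2) :
    ∃ C : ℝ, 0 < C ∧ ∀ n : ℕ, 1 ≤ n → ∀ w : Fin n → Fin 3,
      sv1 (Cword p w) ≤ C * (max (2*p) (1 - 2*p)) ^ n :=
  norm_Cword_le_general p
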